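/- arXiv:1210.7361 — 2 statements merged into one kernel-verified Lean document; each statement's English description precedes it below -/
import Mathlib

section
/- Let T be a finite tree, let u and v be vertices of T, and let w be any walk in T from u to v. Then for every edge e of T, the number of times w traverses e is congruent modulo 2 to 1 if e lies on the unique path in T from u to v, and congruent to 0 modulo 2 otherwise. -/
/-!
Deleting an edge `e = s(a, b)` of a tree separates `a` from `b`. Colour each vertex by whether it
is still reachable from `a` after the deletion: the colour changes along an edge of a walk exactly
when that edge is `e`. Hence every walk from `u` to `v` crosses `e` a number of times whose parity
is the colour difference of `u` and `v`, the same for all such walks; a path crosses `e` at most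
once.
-/

namespace SimpleGraph

variable {V : Type*} [DecidableEq V] {G : SimpleGraph V}

theorem Walk.natCast_count_edges_eq_sub {e : Sym2 V} (φ : V → ZMod 2)
    (hφ : ∀ x y, G.Adj x y → φ y = φ x + if s(x, y) = e then 1 else 0) {u v : V} (p : G.Walk u v) :
    (p.edges.count e : ZMod 2) = φ v - φ u := by
  induction p with
  | nil => simp
  | cons h p ih =>
    simp only [Walk.edges_cons, List.count_cons, beq_iff_eq]
    rw [Nat.cast_add, ih, hφ _ _ h]
    split_ifs <;> push_cast <;> ring

theorem IsBridge.exists_flip_potential {e : Sym2 V} (he : G.IsBridge e) :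
    ∃ φ : V → ZMod 2, ∀ x y, G.Adj x y → φ y = φ x + if s(x, y) = e then 1 else 0 := by
  classical
  induction e using Sym2.ind with
  | _ a b =>
  set H := G.deleteEdges {s(a, b)}
  refine ⟨fun x => if H.Reachable a x then 0 else 1, fun x y hxy => ?_⟩
  have hab : ¬H.Reachable a b := isBridge_iff.mp he
  by_cases hxy_e : s(x, y) = s(a, b)
  · rcases Sym2.eq_iff.mp hxy_e with ⟨rfl, rfl⟩ | ⟨rfl, rfl⟩
    · simp [hab]
    · simp [hab]
      decide
  · have hdel : H.Adj x y := by simpa [H, hxy] using hxy_e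
    have hside : H.Reachable a x ↔ H.Reachable a y :=
      ⟨fun r => r.trans hdel.reachable, fun r => r.trans hdel.symm.reachable⟩
    simp [hside, hxy_e]

theorem IsBridge.count_edges_mod_two_eq {e : Sym2 V} (he : G.IsBridge e) {u v : V}
    (p q : G.Walk u v) : p.edges.count e % 2 = q.edges.count e % 2 := by
  obtain ⟨φ, hφ⟩ := he.exists_flip_potential
  exact (ZMod.natCast_eq_natCast_iff' _ _ 2).mp <| by
    rw [Walk.natCast_count_edges_eq_sub φ hφ p, Walk.natCast_count_edges_eq_sub φ hφ q]

theorem Walk.IsPath.count_edges_mod_two {u v : V} {p : G.Walk u v} (hp : p.IsPath) (e : Sym2 V) :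
    p.edges.count e % 2 = if e ∈ p.edges then 1 else 0 := by
  split_ifs with he
  · rw [List.count_eq_one_of_mem hp.edges_nodup he]
  · rw [List.count_eq_zero.mpr he]

end SimpleGraph

theorem stmt_2_general {V : Type*} [DecidableEq V] (T : SimpleGraph V)
    (hT : T.IsTree) (u v : V) (w : T.Walk u v)
    (pth : T.Walk u v) (hpth : pth.IsPath) (e : Sym2 V) (he : e ∈ T.edgeSet) :
    w.edges.count e % 2 = if e ∈ pth.edges then 1 else 0 := by
  have hbridge : T.IsBridge e :=
    SimpleGraph.isAcyclic_iff_forall_isBridge.mp hT.isAcyclic he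
  rw [hbridge.count_edges_mod_two_eq w pth, hpth.count_edges_mod_two]

/-- In a finite tree, any walk `w` from `u` to `v` traverses each edge
`e` an odd number of times if `e` lies on the unique path from `u` to `v`, and an
even number of times otherwise. -/
theorem stmt_2 {V : Type*} [Fintype V] [DecidableEq V] (T : SimpleGraph V)
    (hT : T.IsTree) (u v : V) (w : T.Walk u v)
    (pth : T.Walk u v) (hpth : pth.IsPath) (e : Sym2 V) (he : e ∈ T.edgeSet) :
    w.edges.count e % 2 = if e ∈ pth.edges then 1 else 0 :=
  stmt_2_general T hT u v w pth hpth e he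
end

section
/- Let T be the spider tree with center vertex c and three legs of length 3 (10 vertices, 9 edges). Then there do not exist two connected subgraphs S1 and S2 of T, each having at most 5 edges, whose edge sets together cover all 9 edges of T. -/
/-!
Each leaf edge of the spider lies in `S₁` or `S₂`, so one of them, say `S`, contains the leaf
edges of two different legs. The only edge leaving a tail `v_{k,m+1}, …, v_{k,3}` of a leg is the
one from `v_{k,m+1}` towards the centre, so a connected `S` that reaches both tips, and hence
leaves both legs, contains all three edges of each of the two legs: six edges.
-/

/-- The spider tree with center `none` and three legs of length 3: for each
`i : Fin 3` the leg consists of the vertices `some (i, 0)`, `some (i, 1)`,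
`some (i, 2)` (i.e. `v_{i,1}`, `v_{i,2}`, `v_{i,3}`). -/
def spider : SimpleGraph (Option (Fin 3 × Fin 3)) :=
  SimpleGraph.fromEdgeSet
    {e | ∃ i : Fin 3,
      e = s((none : Option (Fin 3 × Fin 3)), some (i, 0)) ∨
      e = s(some (i, 0), some (i, 1)) ∨
      e = s(some (i, 1), some (i, 2))}

namespace SimpleGraph.Subgraph

variable {V : Type*} {G : SimpleGraph V} {H : G.Subgraph}

theorem Connected.exists_adj_boundary (hH : H.Connected) {u v : V} (hu : u ∈ H.verts)
    (hv : v ∈ H.verts) {P : Set V} (huP : u ∈ P) (hvP : v ∉ P) :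
    ∃ a b, H.Adj a b ∧ a ∈ P ∧ b ∉ P := by
  obtain ⟨p⟩ := hH.preconnected ⟨u, hu⟩ ⟨v, hv⟩
  obtain ⟨d, -, hd⟩ := p.exists_boundary_dart (Subtype.val ⁻¹' P) huP hvP
  exact ⟨d.fst, d.snd, d.adj, hd⟩

end SimpleGraph.Subgraph

instance : DecidableRel spider.Adj := fun a b =>
  decidable_of_iff
    ((∃ i : Fin 3,
      s(a, b) = s((none : Option (Fin 3 × Fin 3)), some (i, 0)) ∨
      s(a, b) = s(some (i, 0), some (i, 1)) ∨
      s(a, b) = s(some (i, 1), some (i, 2))) ∧ a ≠ b)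
    (by rw [spider, SimpleGraph.fromEdgeSet_adj]; rfl)

-- The neighbour towards the centre; the centre `none` itself is sent to `none`.
def spiderParent : Option (Fin 3 × Fin 3) → Option (Fin 3 × Fin 3)
  | some (k, 1) => some (k, 0)
  | some (k, 2) => some (k, 1)
  | _ => none

-- The vertices `v_{k,m+1}, …, v_{k,3}` of the leg `k`.
def legTail (k m : Fin 3) : Set (Option (Fin 3 × Fin 3)) :=
  {x | ∃ l, m ≤ l ∧ x = some (k, l)}

instance (k m : Fin 3) : DecidablePred (· ∈ legTail k m) := fun x =>
  inferInstanceAs (Decidable (∃ l, m ≤ l ∧ x = some (k, l)))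

theorem spider_adj_out_of_legTail (k m : Fin 3) (a b : Option (Fin 3 × Fin 3)) :
    spider.Adj a b → a ∈ legTail k m → b ∉ legTail k m →
      a = some (k, m) ∧ b = spiderParent (some (k, m)) := by
  revert k m a b; decide

theorem legTail_subset_legTail_zero (k m : Fin 3) : legTail k m ⊆ legTail k 0 :=
  fun _ ⟨l, _, hx⟩ => ⟨l, Fin.zero_le l, hx⟩

def legEdges (k : Fin 3) : Finset (Sym2 (Option (Fin 3 × Fin 3))) :=
  Finset.univ.image fun m => s(some (k, m), spiderParent (some (k, m)))

theorem card_legEdges_union {i j : Fin 3} (hij : i ≠ j) :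
    (legEdges i ∪ legEdges j).card = 6 := by
  revert i j; decide

theorem legEdges_subset_edgeSet {S : spider.Subgraph} (hS : S.Connected) {k : Fin 3}
    (hk : some (k, 2) ∈ S.verts) {v : Option (Fin 3 × Fin 3)} (hv : v ∈ S.verts)
    (hvk : v ∉ legTail k 0) : ↑(legEdges k) ⊆ S.edgeSet := by
  simp only [legEdges, Finset.coe_image, Finset.coe_univ, Set.image_univ, Set.range_subset_iff]
  intro m
  obtain ⟨a, b, hab, ha, hb⟩ := hS.exists_adj_boundary hk hv (P := legTail k m)
    ⟨2, Fin.le_last m, rfl⟩ fun h => hvk (legTail_subset_legTail_zero k m h)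
  obtain ⟨rfl, rfl⟩ := spider_adj_out_of_legTail k m a b hab.adj_sub ha hb
  exact hab

theorem six_le_ncard_edgeSet {S : spider.Subgraph} (hS : S.Connected) {i j : Fin 3} (hij : i ≠ j)
    (hi : some (i, 2) ∈ S.verts) (hj : some (j, 2) ∈ S.verts) : 6 ≤ S.edgeSet.ncard := by
  have hji : some (j, 2) ∉ legTail i 0 := by simp [legTail, Ne.symm hij]
  have hij' : some (i, 2) ∉ legTail j 0 := by simp [legTail, hij]
  have hsub : (↑(legEdges i ∪ legEdges j) : Set (Sym2 (Option (Fin 3 × Fin 3)))) ⊆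
      S.edgeSet := by
    rw [Finset.coe_union]
    exact Set.union_subset (legEdges_subset_edgeSet hS hi hj hji)
      (legEdges_subset_edgeSet hS hj hi hij')
  simpa only [Set.ncard_coe_finset, card_legEdges_union hij] using Set.ncard_le_ncard hsub

/-- There are no two connected subgraphs of the spider tree, each with
at most 5 edges, whose edge sets together cover all 9 edges of the spider tree. -/
theorem stmt_6 :
    ¬ ∃ S₁ S₂ : spider.Subgraph, S₁.Connected ∧ S₂.Connected ∧
      S₁.edgeSet.ncard ≤ 5 ∧ S₂.edgeSet.ncard ≤ 5 ∧
      S₁.edgeSet ∪ S₂.edgeSet = spider.edgeSet := by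
  rintro ⟨S₁, S₂, hc₁, hc₂, h₁, h₂, hcov⟩
  have htip (k : Fin 3) : some (k, 2) ∈ S₁.verts ∨ some (k, 2) ∈ S₂.verts := by
    have hleaf : s(some (k, 1), some (k, 2)) ∈ spider.edgeSet := by
      rw [SimpleGraph.mem_edgeSet]; revert k; decide
    rw [← hcov] at hleaf
    exact hleaf.imp (fun h => S₁.edge_vert (S₁.adj_symm h))
      (fun h => S₂.edge_vert (S₂.adj_symm h))
  obtain ⟨i, j, hij, hsame⟩ :=
    Fintype.exists_ne_map_eq_of_card_lt (fun k : Fin 3 => some (k, 2) ∈ S₁.verts) (by simp)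
  by_cases hi : some (i, 2) ∈ S₁.verts
  · have := six_le_ncard_edgeSet hc₁ hij hi (hsame ▸ hi)
    omega
  · have := six_le_ncard_edgeSet hc₂ hij ((htip i).resolve_left hi)
      ((htip j).resolve_left (hsame ▸ hi))
    omega
end
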